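/- Let k be a field, let R = k[[t⁵, t⁶, t¹³, t¹⁴]] ⊆ k[[t]] with maximal ideal m = (t⁵, t⁶, t¹³, t¹⁴), let I = (t¹⁰, t¹¹, t¹²), and let L = (t⁵, t¹², t¹³, t¹⁴). Then: (a) the kernel of the R-linear surjection R^{⊕3} → I sending e₁ ↦ t¹⁰, e₂ ↦ t¹¹, e₃ ↦ t¹² (the first syzygy module Ω¹_R(I)) is isomorphic to L ⊕ L as an R-module; (b) tr_R(L) = m. -/

import Mathlib

universe u

set_option synthInstance.maxHeartbeats 1000000
set_option maxHeartbeats 1000000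

open PowerSeries

/-- The numerical semigroup `⟨5, 6, 13, 14⟩`. -/
def sgp : AddSubmonoid ℕ := AddSubmonoid.closure {5, 6, 13, 14}

/-- The complete numerical semigroup ring `k[[t⁵, t⁶, t¹³, t¹⁴]]`: the subalgebra of `k[[t]]`
consisting of power series supported on the numerical semigroup `⟨5, 6, 13, 14⟩`. -/
noncomputable def cnsRing (k : Type u) [Field k] : Subalgebra k (PowerSeries k) where
  carrier := {f | ∀ d : ℕ, coeff d f ≠ 0 → d ∈ sgp}
  add_mem' {f g} hf hg d hd := by
    rw [map_add] at hd
    by_cases h : coeff d f ≠ 0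
    · exact hf d h
    · push_neg at h
      exact hg d (by simpa [h] using hd)
  mul_mem' {f g} hf hg d hd := by
    rw [coeff_mul] at hd
    obtain ⟨p, hp, hne⟩ := Finset.exists_ne_zero_of_sum_ne_zero hd
    rw [Finset.HasAntidiagonal.mem_antidiagonal] at hp
    exact hp ▸ add_mem (hf p.1 (left_ne_zero_of_mul hne)) (hg p.2 (right_ne_zero_of_mul hne))
  one_mem' d hd := by
    rw [coeff_one] at hd
    simp only [ne_eq, ite_eq_right_iff, not_forall] at hd
    exact hd.1 ▸ zero_mem sgp
  algebraMap_mem' c d hd := by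
    rw [PowerSeries.algebraMap_apply, coeff_C] at hd
    simp only [ne_eq, ite_eq_right_iff, not_forall] at hd
    exact hd.1 ▸ zero_mem sgp

/-- The element `t^d` of `k[[t⁵, t⁶, t¹³, t¹⁴]]`, for `d` in the semigroup `⟨5, 6, 13, 14⟩`. -/
noncomputable def tp (k : Type u) [Field k] (d : ℕ) (hd : d ∈ sgp) : ↥(cnsRing k) :=
  ⟨PowerSeries.X ^ d, fun e he => by
    rw [coeff_X_pow] at he
    simp only [ne_eq, ite_eq_right_iff, not_forall] at he
    exact he.1 ▸ hd⟩

lemma mem5 : (5 : ℕ) ∈ sgp := AddSubmonoid.subset_closure (by norm_num)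
lemma mem6 : (6 : ℕ) ∈ sgp := AddSubmonoid.subset_closure (by norm_num)
lemma mem13 : (13 : ℕ) ∈ sgp := AddSubmonoid.subset_closure (by norm_num)
lemma mem14 : (14 : ℕ) ∈ sgp := AddSubmonoid.subset_closure (by norm_num)
lemma mem10 : (10 : ℕ) ∈ sgp := by have h := add_mem mem5 mem5; norm_num at h; exact h
lemma mem11 : (11 : ℕ) ∈ sgp := by have h := add_mem mem5 mem6; norm_num at h; exact h
lemma mem12 : (12 : ℕ) ∈ sgp := by have h := add_mem mem6 mem6; norm_num at h; exact h

/-- The trace ideal of an `R`-module `M`: the ideal of `R` generated by all values `f(m)`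
for `f ∈ Hom_R(M, R)` and `m ∈ M`. -/
def traceIdeal (R : Type*) (M : Type*) [CommRing R] [AddCommGroup M] [Module R M] : Ideal R :=
  Ideal.span {r : R | ∃ (f : M →ₗ[R] R) (m : M), f m = r}

/-! `L` is the colon ideal `(R :_R t) = {x ∈ R | t x ∈ R}`: the series in `R` without `t⁰` and
`t⁶` terms. As `I = t¹⁰ (1, t, t²)`, a syzygy `(a, b, c)` is a relation `a + t b + t² c = 0`, which
forces `c ∈ L` and `u = b + t c ∈ L` (since `t u = -a`); then `(u, c) ↦ (-t u, u - t c, c)` is the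
inverse of `(a, b, c) ↦ (u, c)`.

Multiplication by `t` maps `L` to `R` and hits `t⁶`, so `m ⊆ tr(L)`. Conversely every `f : L → R`
satisfies `w f(z) = z f(w)`; the `t¹²`-coefficient of `t⁵ f(t¹²) = t¹² f(t⁵)` shows `f(t⁵) ∈ m`,
and then the `t⁵`-coefficient of `t⁵ f(z) = z f(t⁵) ∈ m²` shows `f(z) ∈ m`. -/

namespace Subalgebra

variable {R A : Type*} [CommSemiring R] [CommSemiring A] [Algebra R A] (S : Subalgebra R A)

theorem mem_one_submodule_iff {a : A} : a ∈ (1 : Submodule S A) ↔ a ∈ S := by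
  rw [Submodule.mem_one]
  exact ⟨fun ⟨y, hy⟩ => hy ▸ y.2, fun ha => ⟨⟨a, ha⟩, rfl⟩⟩

theorem mem_colon_singleton_iff {a : A} {x : S} :
    x ∈ (1 : Submodule S A).colon {a} ↔ (x : A) * a ∈ S := by
  rw [Submodule.mem_colon_singleton, mem_one_submodule_iff, Algebra.smul_def]
  rfl

noncomputable def colonMul (a : A) : (1 : Submodule S A).colon {a} →ₗ[S] S where
  toFun x := ⟨x * a, (S.mem_colon_singleton_iff).1 x.2⟩
  map_add' _ _ := Subtype.ext (add_mul _ _ _)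
  map_smul' _ _ := Subtype.ext (mul_assoc _ _ _)

@[simp]
theorem coe_colonMul_apply (a : A) (x : (1 : Submodule S A).colon {a}) :
    (S.colonMul a x : A) = x * a :=
  rfl

end Subalgebra

theorem Ideal.coe_mul_apply_comm {R : Type*} [CommRing R] {I : Ideal R} (f : I →ₗ[R] R)
    (w z : I) : (w : R) * f z = z * f w := by
  rw [← smul_eq_mul, ← map_smul, ← smul_eq_mul (z : R), ← map_smul]
  congr 1
  exact Subtype.ext (mul_comm _ _)

theorem apply_mem_traceIdeal {R M : Type*} [CommRing R] [AddCommGroup M] [Module R M]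
    (f : M →ₗ[R] R) (m : M) : f m ∈ traceIdeal R M :=
  Ideal.subset_span ⟨f, m, rfl⟩

theorem le_traceIdeal {R : Type*} [CommRing R] (I : Ideal R) : I ≤ traceIdeal R I :=
  fun x hx => apply_mem_traceIdeal I.subtype ⟨x, hx⟩

theorem mem_sgp_of_ten_le {d : ℕ} (hd : 10 ≤ d) : d ∈ sgp := by
  induction d using Nat.strong_induction_on with
  | _ d ih =>
    by_cases h : 15 ≤ d
    · simpa [Nat.sub_add_cancel (by omega : 5 ≤ d)] using
        add_mem (ih (d - 5) (by omega) (by omega)) mem5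
    · interval_cases d
      exacts [mem10, mem11, mem12, mem13, mem14]

theorem mem_sgp_iff {d : ℕ} : d ∈ sgp ↔ d = 0 ∨ d = 5 ∨ d = 6 ∨ 10 ≤ d := by
  refine ⟨fun h => ?_, ?_⟩
  · induction h using AddSubmonoid.closure_induction with
    | mem x hx => simp only [Set.mem_insert_iff, Set.mem_singleton_iff] at hx; omega
    | zero => exact Or.inl rfl
    | add _ _ _ _ ha hb => omega
  · rintro (rfl | rfl | rfl | hd)
    exacts [zero_mem _, mem5, mem6, mem_sgp_of_ten_le hd]

section cnsRing

variable {k : Type u} [Field k]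

theorem coeff_cnsRing_eq_zero (x : cnsRing k) {d : ℕ} (hd : d ∉ sgp) : coeff d (x : k⟦X⟧) = 0 :=
  not_imp_comm.1 (x.2 d) hd

@[simp]
theorem coe_tp (d : ℕ) (hd : d ∈ sgp) : (tp k d hd : k⟦X⟧) = X ^ d :=
  rfl

theorem mul_X_mem_cnsRing_iff (x : cnsRing k) :
    (x : k⟦X⟧) * X ∈ cnsRing k ↔ coeff 0 (x : k⟦X⟧) = 0 ∧ coeff 6 (x : k⟦X⟧) = 0 := by
  refine ⟨fun h => ⟨?_, ?_⟩, fun ⟨h0, h6⟩ => ?_⟩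
  · simpa using coeff_cnsRing_eq_zero ⟨_, h⟩ (d := 1) (by rw [mem_sgp_iff]; omega)
  · simpa using coeff_cnsRing_eq_zero ⟨_, h⟩ (d := 7) (by rw [mem_sgp_iff]; omega)
  · rintro (_ | d) hd
    · simp at hd
    · rw [coeff_succ_mul_X] at hd
      have := mem_sgp_iff.1 (x.2 d hd)
      have : d ≠ 0 := by rintro rfl; exact hd h0
      have : d ≠ 6 := by rintro rfl; exact hd h6
      rw [mem_sgp_iff]
      omega

theorem tp_dvd_of_coeff_ne_zero {n : ℕ} (hn : n ∈ sgp) {x : cnsRing k}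
    (hx : ∀ d, coeff d (x : k⟦X⟧) ≠ 0 → n ≤ d ∧ d - n ∈ sgp) : tp k n hn ∣ x := by
  obtain ⟨y, hy⟩ : X ^ n ∣ (x : k⟦X⟧) :=
    X_pow_dvd_iff.2 fun d hd => by_contra fun h => absurd (hx d h).1 (by omega)
  refine ⟨⟨y, fun d hd => ?_⟩, Subtype.ext hy⟩
  have h := hx (d + n) (by rwa [hy, coeff_X_pow_mul', if_pos (by omega), Nat.add_sub_cancel])
  simpa using h.2

end cnsRing

section ideals

variable {k : Type u} [Field k]

variable (k) in
noncomputable abbrev colonX : Ideal (cnsRing k) := (1 : Submodule (cnsRing k) k⟦X⟧).colon {X}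

variable (k) in
noncomputable def cnsMaxIdeal : Ideal (cnsRing k) :=
  RingHom.ker (constantCoeff.comp (algebraMap (cnsRing k) k⟦X⟧))

theorem mem_colonX_iff {x : cnsRing k} :
    x ∈ colonX k ↔ coeff 0 (x : k⟦X⟧) = 0 ∧ coeff 6 (x : k⟦X⟧) = 0 :=
  (Subalgebra.mem_colon_singleton_iff _).trans (mul_X_mem_cnsRing_iff x)

theorem mem_cnsMaxIdeal_iff {x : cnsRing k} : x ∈ cnsMaxIdeal k ↔ coeff 0 (x : k⟦X⟧) = 0 := by
  rw [cnsMaxIdeal, RingHom.mem_ker, coeff_zero_eq_constantCoeff]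
  rfl

theorem tp_mem_colonX {n : ℕ} (hn : n ∈ sgp) (h0 : n ≠ 0) (h6 : n ≠ 6) : tp k n hn ∈ colonX k :=
  mem_colonX_iff.2 (by simp [coeff_X_pow, h0.symm, h6.symm])

theorem colonX_le_cnsMaxIdeal : colonX k ≤ cnsMaxIdeal k :=
  fun _ hx => mem_cnsMaxIdeal_iff.2 (mem_colonX_iff.1 hx).1

theorem X_pow_five_dvd_of_mem_cnsMaxIdeal {x : cnsRing k} (hx : x ∈ cnsMaxIdeal k) :
    X ^ 5 ∣ (x : k⟦X⟧) := by
  refine X_pow_dvd_iff.2 fun d hd => ?_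
  obtain rfl | hd0 := eq_or_ne d 0
  · exact mem_cnsMaxIdeal_iff.1 hx
  · exact coeff_cnsRing_eq_zero x (by rw [mem_sgp_iff]; omega)

theorem tp_five_dvd_of_mem_colonX {x : cnsRing k} (hx : x ∈ colonX k) :
    tp k 5 mem5 ∣ x - coeff 12 (x : k⟦X⟧) • tp k 12 mem12 - coeff 13 (x : k⟦X⟧) • tp k 13 mem13
      - coeff 14 (x : k⟦X⟧) • tp k 14 mem14 := by
  obtain ⟨h0, h6⟩ := mem_colonX_iff.1 hx
  refine tp_dvd_of_coeff_ne_zero mem5 fun d hd => ?_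
  rcases (by omega : d = 12 ∨ d = 13 ∨ d = 14 ∨ (d ≠ 12 ∧ d ≠ 13 ∧ d ≠ 14)) with
    rfl | rfl | rfl | ⟨h12, h13, h14⟩
  · simp at hd
  · simp at hd
  · simp at hd
  simp only [AddSubgroupClass.coe_sub, SetLike.val_smul, coe_tp, map_sub, coeff_smul, coeff_X_pow,
    if_neg h12, if_neg h13, if_neg h14, smul_zero, sub_zero] at hd
  have := mem_sgp_iff.1 (x.2 d hd)
  have : d ≠ 0 := by rintro rfl; exact hd h0
  have : d ≠ 6 := by rintro rfl; exact hd h6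
  rw [mem_sgp_iff]
  omega

theorem colonX_eq_span :
    colonX k = Ideal.span {tp k 5 mem5, tp k 12 mem12, tp k 13 mem13, tp k 14 mem14} := by
  refine le_antisymm (fun x hx => ?_) ?_
  · obtain ⟨y, hy⟩ := tp_five_dvd_of_mem_colonX hx
    have hx : x = tp k 5 mem5 * y + coeff 12 (x : k⟦X⟧) • tp k 12 mem12
        + coeff 13 (x : k⟦X⟧) • tp k 13 mem13 + coeff 14 (x : k⟦X⟧) • tp k 14 mem14 := by
      rw [← hy]
      abel
    rw [hx]
    refine add_mem (add_mem (add_mem ?_ ?_) ?_) ?_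
    · exact Ideal.mul_mem_right _ _ (Ideal.subset_span (by simp))
    all_goals exact Submodule.smul_of_tower_mem _ _ (Ideal.subset_span (by simp))
  · rw [Ideal.span_le]
    rintro x (rfl | rfl | rfl | rfl) <;> exact tp_mem_colonX _ (by norm_num) (by norm_num)

theorem cnsMaxIdeal_le_colonX_sup : cnsMaxIdeal k ≤ colonX k ⊔ Ideal.span {tp k 6 mem6} := by
  intro x hx
  have h0 := mem_cnsMaxIdeal_iff.1 hx
  rw [← sub_add_cancel x (coeff 6 (x : k⟦X⟧) • tp k 6 mem6)]
  refine Submodule.add_mem_sup (mem_colonX_iff.2 ?_)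
    (Submodule.smul_of_tower_mem _ _ (Ideal.mem_span_singleton_self _))
  simpa [coeff_X_pow] using h0

theorem span_eq_cnsMaxIdeal :
    Ideal.span {tp k 5 mem5, tp k 6 mem6, tp k 13 mem13, tp k 14 mem14} = cnsMaxIdeal k := by
  refine le_antisymm ?_ (cnsMaxIdeal_le_colonX_sup.trans (sup_le ?_ (Ideal.span_mono (by simp))))
  · rw [Ideal.span_le]
    rintro x (rfl | rfl | rfl | rfl) <;> exact mem_cnsMaxIdeal_iff.2 (by simp [coeff_X_pow])
  · rw [colonX_eq_span, Ideal.span_le]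
    have h12 : tp k 12 mem12 = tp k 6 mem6 * tp k 6 mem6 := Subtype.ext (by simp [← pow_add])
    rintro x (rfl | rfl | rfl | rfl)
    · exact Ideal.subset_span (by simp)
    · rw [h12]
      exact Ideal.mul_mem_left _ _ (Ideal.subset_span (by simp))
    all_goals exact Ideal.subset_span (by simp)

theorem coeff_zero_apply_eq_zero (f : colonX k →ₗ[cnsRing k] cnsRing k) (z : colonX k) :
    coeff 0 (f z : k⟦X⟧) = 0 := by
  let t5 : colonX k := ⟨tp k 5 mem5, tp_mem_colonX mem5 (by norm_num) (by norm_num)⟩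
  let t12 : colonX k := ⟨tp k 12 mem12, tp_mem_colonX mem12 (by norm_num) (by norm_num)⟩
  have h5 : coeff 0 (f t5 : k⟦X⟧) = 0 := by
    have h := congrArg (fun y : cnsRing k => coeff 12 (y : k⟦X⟧))
      (Ideal.coe_mul_apply_comm f t5 t12)
    simp only [MulMemClass.coe_mul, t5, t12, coe_tp, coeff_X_pow_mul', le_refl, Nat.sub_self,
      Nat.reduceLeDiff, Nat.reduceSub, if_true] at h
    rw [← h]
    exact coeff_cnsRing_eq_zero _ (by rw [mem_sgp_iff]; omega)
  have h := congrArg (fun y : cnsRing k => coeff 5 (y : k⟦X⟧)) (Ideal.coe_mul_apply_comm f t5 z)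
  simp only [MulMemClass.coe_mul, t5, coe_tp, coeff_X_pow_mul', le_refl, Nat.sub_self,
    if_true] at h
  rw [h]
  have h10 : X ^ 10 ∣ (z : k⟦X⟧) * (f t5 : k⟦X⟧) :=
    pow_add (X : k⟦X⟧) 5 5 ▸
      mul_dvd_mul (X_pow_five_dvd_of_mem_cnsMaxIdeal (colonX_le_cnsMaxIdeal z.2))
        (X_pow_five_dvd_of_mem_cnsMaxIdeal (mem_cnsMaxIdeal_iff.2 h5))
  exact X_pow_dvd_iff.1 h10 5 (by norm_num)

theorem traceIdeal_colonX : traceIdeal (cnsRing k) (colonX k) = cnsMaxIdeal k := by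
  refine le_antisymm ?_ (cnsMaxIdeal_le_colonX_sup.trans (sup_le (le_traceIdeal _) ?_))
  · rw [traceIdeal, Ideal.span_le]
    rintro _ ⟨f, z, rfl⟩
    exact mem_cnsMaxIdeal_iff.2 (coeff_zero_apply_eq_zero f z)
  · rw [Ideal.span_le, Set.singleton_subset_iff]
    have h6 : (cnsRing k).colonMul X ⟨tp k 5 mem5, tp_mem_colonX mem5 (by norm_num) (by norm_num)⟩ =
        tp k 6 mem6 := Subtype.ext (by simp [pow_succ])
    exact h6 ▸ apply_mem_traceIdeal _ _

end ideals

section syzygy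

variable {k : Type u} [Field k]

variable (k) in
noncomputable abbrev presentationI : (Fin 3 → cnsRing k) →ₗ[cnsRing k] cnsRing k :=
  Fintype.linearCombination (cnsRing k) ![tp k 10 mem10, tp k 11 mem11, tp k 12 mem12]

theorem mem_ker_presentationI_iff {g : Fin 3 → cnsRing k} :
    g ∈ LinearMap.ker (presentationI k) ↔
      (g 0 : k⟦X⟧) + X * (g 1 : k⟦X⟧) + X ^ 2 * (g 2 : k⟦X⟧) = 0 := by
  rw [LinearMap.mem_ker, Fintype.linearCombination_apply, Fin.sum_univ_three, ← Subtype.coe_inj]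
  have h : (g 0 : k⟦X⟧) * X ^ 10 + (g 1 : k⟦X⟧) * X ^ 11 + (g 2 : k⟦X⟧) * X ^ 12 =
      X ^ 10 * ((g 0 : k⟦X⟧) + X * (g 1 : k⟦X⟧) + X ^ 2 * (g 2 : k⟦X⟧)) := by ring
  simp [h, X_ne_zero]

theorem apply_two_mem_colonX_of_mem_ker {g : Fin 3 → cnsRing k}
    (hg : g ∈ LinearMap.ker (presentationI k)) : g 2 ∈ colonX k := by
  have hg := mem_ker_presentationI_iff.1 hg
  have coeff_rel (n : ℕ) :
      coeff (n + 2) (g 0 : k⟦X⟧) + coeff (n + 1) (g 1 : k⟦X⟧) + coeff n (g 2 : k⟦X⟧) = 0 := by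
    simpa [coeff_X_pow_mul', ← add_assoc] using congrArg (coeff (n + 2)) hg
  refine mem_colonX_iff.2 ⟨?_, ?_⟩
  · simpa [coeff_cnsRing_eq_zero _ (by rw [mem_sgp_iff]; omega : 1 ∉ sgp),
      coeff_cnsRing_eq_zero _ (by rw [mem_sgp_iff]; omega : 2 ∉ sgp)] using coeff_rel 0
  · simpa [coeff_cnsRing_eq_zero _ (by rw [mem_sgp_iff]; omega : 7 ∉ sgp),
      coeff_cnsRing_eq_zero _ (by rw [mem_sgp_iff]; omega : 8 ∉ sgp)] using coeff_rel 6

variable (k) in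
noncomputable def syzygyMap : colonX k × colonX k →ₗ[cnsRing k] (Fin 3 → cnsRing k) :=
  LinearMap.pi ![-((cnsRing k).colonMul X ∘ₗ LinearMap.fst _ _ _),
    (colonX k).subtype ∘ₗ LinearMap.fst _ _ _ - (cnsRing k).colonMul X ∘ₗ LinearMap.snd _ _ _,
    (colonX k).subtype ∘ₗ LinearMap.snd _ _ _]

@[simp]
theorem syzygyMap_apply (p : colonX k × colonX k) :
    syzygyMap k p = ![-(cnsRing k).colonMul X p.1, p.1 - (cnsRing k).colonMul X p.2, p.2] := by
  ext i
  fin_cases i <;> rfl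

theorem syzygyMap_injective : Function.Injective (syzygyMap k) := by
  refine (injective_iff_map_eq_zero _).2 fun ⟨u, c⟩ h => ?_
  have hc : c = 0 := by simpa using congrFun h 2
  subst hc
  have hu : u = 0 := by simpa using congrFun h 1
  rw [hu, Prod.mk_zero_zero]

theorem range_syzygyMap : LinearMap.range (syzygyMap k) = LinearMap.ker (presentationI k) := by
  refine le_antisymm ?_ fun g hg => ?_
  · rintro _ ⟨p, rfl⟩
    rw [mem_ker_presentationI_iff]
    simp only [syzygyMap_apply, Matrix.cons_val_zero, Matrix.cons_val_one, Matrix.cons_val,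
      NegMemClass.coe_neg, AddSubgroupClass.coe_sub, Subalgebra.coe_colonMul_apply]
    ring
  · have hc := apply_two_mem_colonX_of_mem_ker hg
    have hrel := mem_ker_presentationI_iff.1 hg
    have hcX : (g 2 : k⟦X⟧) * X ∈ cnsRing k := (Subalgebra.mem_colon_singleton_iff _).1 hc
    let u : cnsRing k := ⟨(g 1 : k⟦X⟧) + (g 2 : k⟦X⟧) * X, add_mem (g 1).2 hcX⟩
    have huX : (u : k⟦X⟧) * X = -(g 0 : k⟦X⟧) := by
      simp only [u]
      linear_combination hrel
    have hu : u ∈ colonX k := (Subalgebra.mem_colon_singleton_iff _).2 (huX ▸ neg_mem (g 0).2)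
    refine ⟨(⟨u, hu⟩, ⟨g 2, hc⟩), ?_⟩
    rw [syzygyMap_apply]
    ext i : 1
    fin_cases i
    · exact Subtype.ext (neg_eq_iff_eq_neg.2 huX)
    · exact Subtype.ext (add_sub_cancel_right _ _)
    · rfl

variable (k) in
noncomputable def syzygyEquiv : LinearMap.ker (presentationI k) ≃ₗ[cnsRing k] colonX k × colonX k :=
  ((LinearEquiv.ofInjective _ syzygyMap_injective).trans
    (LinearEquiv.ofEq _ _ range_syzygyMap)).symm

end syzygy

/-- Let `k` be a field, `R = k[[t⁵,t⁶,t¹³,t¹⁴]]` with maximal ideal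
`m = (t⁵,t⁶,t¹³,t¹⁴)`, `I = (t¹⁰,t¹¹,t¹²)` and `L = (t⁵,t¹²,t¹³,t¹⁴)`.  Then:
(a) the kernel of `R^{⊕3} → I`, `e₁ ↦ t¹⁰, e₂ ↦ t¹¹, e₃ ↦ t¹²` (the first syzygy module
    `Ω¹_R(I)`) is isomorphic to `L ⊕ L` as an `R`-module;
(b) `tr_R(L) = m`. -/
theorem syzygy_of_canonical_ideal (k : Type u) [Field k] :
    Nonempty
      (↥(LinearMap.ker (Fintype.linearCombination ↥(cnsRing k)
          ![tp k 10 mem10, tp k 11 mem11, tp k 12 mem12]))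
        ≃ₗ[↥(cnsRing k)]
        (↥(Ideal.span {tp k 5 mem5, tp k 12 mem12, tp k 13 mem13, tp k 14 mem14}) ×
          ↥(Ideal.span {tp k 5 mem5, tp k 12 mem12, tp k 13 mem13, tp k 14 mem14})))
    ∧ traceIdeal ↥(cnsRing k)
        ↥(Ideal.span {tp k 5 mem5, tp k 12 mem12, tp k 13 mem13, tp k 14 mem14}) =
      Ideal.span {tp k 5 mem5, tp k 6 mem6, tp k 13 mem13, tp k 14 mem14} := by
  rw [← colonX_eq_span, span_eq_cnsMaxIdeal]
  exact ⟨⟨syzygyEquiv k⟩, traceIdeal_colonX⟩
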